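/- arXiv:2307.10736 — 3 statements merged into one kernel-verified Lean document; each statement's English description precedes it below -/
import Mathlib

section
/- Fix d ≥ 1, a nonzero vector μ ∈ ℝ^d, σ > 0, and p ∈ (1/2, 1). Let D be the distribution on ℝ^d × {−1,+1} where Y is uniform on {−1,+1}, X given Y=+1 is N(μ, σ²I), and X given Y=−1 is the mixture p·N(−μ, σ²I) + (1−p)·N(3μ, σ²I). Let h^LDA be the classifier that outputs +1 if ‖x − μ‖ ≤ ‖x − μ₋‖ and −1 otherwise, where μ₋ = −(4p−3)μ. Then the misclassification error satisfies Pr_{(X,Y)∼D}[h^LDA(X) ≠ Y] = (1/2)[Φ(−(2p−1)‖μ‖/σ) + p·Φ(−(3−2p)‖μ‖/σ) + (1−p)·Φ((2p+1)‖μ‖/σ)]. -/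
open MeasureTheory Real Set ProbabilityTheory
open scoped ENNReal RealInnerProductSpace

/-- The standard normal cumulative distribution function
`Φ(z) = ∫_{−∞}^z (1/√(2π)) e^{−u²/2} du`. -/
noncomputable def stdNormCDF (z : ℝ) : ℝ :=
  ∫ u in Set.Iic z, (1 / Real.sqrt (2 * Real.pi)) * Real.exp (-u ^ 2 / 2)
/-- Density of the `d`-dimensional Gaussian `N(m, σ²I)`:
`f(x; m, σ²I) = (2πσ²)^{−d/2} exp(−‖x−m‖²/(2σ²))`. -/
noncomputable def gaussPdf (d : ℕ) (m : EuclideanSpace ℝ (Fin d)) (σ : ℝ)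
    (x : EuclideanSpace ℝ (Fin d)) : ℝ :=
  (2 * Real.pi * σ ^ 2) ^ (-(d : ℝ) / 2) * Real.exp (-‖x - m‖ ^ 2 / (2 * σ ^ 2))

/-- The `d`-dimensional Gaussian measure `N(m, σ²I)` on `ℝ^d`. -/
noncomputable def gauss (d : ℕ) (m : EuclideanSpace ℝ (Fin d)) (σ : ℝ) :
    Measure (EuclideanSpace ℝ (Fin d)) :=
  volume.withDensity fun x => ENNReal.ofReal (gaussPdf d m σ x)
/-- The data-generating distribution `D` on `ℝ^d × {−1,+1}` (labels embedded in `ℝ`):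
`Y` is uniform on `{−1,+1}`, `X | Y=+1 ∼ N(μ, σ²I)`, and
`X | Y=−1 ∼ p·N(−μ, σ²I) + (1−p)·N(3μ, σ²I)`. -/
noncomputable def Dmix (d : ℕ) (μv : EuclideanSpace ℝ (Fin d)) (σ p : ℝ) :
    Measure (EuclideanSpace ℝ (Fin d) × ℝ) :=
  ENNReal.ofReal (1 / 2) • (gauss d μv σ).map (fun x => (x, (1 : ℝ)))
    + ENNReal.ofReal (p / 2) • (gauss d (-μv) σ).map (fun x => (x, (-1 : ℝ)))
    + ENNReal.ofReal ((1 - p) / 2) • (gauss d ((3 : ℝ) • μv) σ).map (fun x => (x, (-1 : ℝ)))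
/-- The LDA classifier with centers `μ` and `μ₋ = −(4p−3)μ`: outputs `+1`
iff `‖x − μ‖ ≤ ‖x − μ₋‖`. -/
noncomputable def hLDA (d : ℕ) (μv : EuclideanSpace ℝ (Fin d)) (p : ℝ)
    (x : EuclideanSpace ℝ (Fin d)) : ℝ :=
  if ‖x - μv‖ ≤ ‖x - (-(4 * p - 3)) • μv‖ then 1 else -1

/-!
A sample of `N(m, σ²I)` has independent coordinates `N(mᵢ, σ²)`, so it is the image of the
standard Gaussian under `x ↦ m + σ x`; hence `⟪μ, X⟫ ∼ N(⟪μ, m⟫, σ²‖μ‖²)`. Expanding the squared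
norms, the LDA rule predicts `+1` exactly on the half-space `⟪μ, x⟫ ≥ (2 - 2p)‖μ‖²` bounded by the
bisector of `μ` and `μ₋`, so each of the three mixture components contributes one Gaussian tail.
-/

open scoped NNReal
open WithLp

lemma stdNormCDF_nonneg (z : ℝ) : 0 ≤ stdNormCDF z :=
  setIntegral_nonneg measurableSet_Iic fun u _ ↦ by positivity

lemma ofReal_stdNormCDF (z : ℝ) : ENNReal.ofReal (stdNormCDF z) = gaussianReal 0 1 (Iic z) := by
  rw [gaussianReal_apply_eq_integral _ one_ne_zero, stdNormCDF]
  congr 1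
  refine setIntegral_congr_fun measurableSet_Iic fun u _ ↦ ?_
  simp [gaussianPDFReal]

lemma gaussianReal_map_const_add_mul (m : ℝ) (v : ℝ≥0) (a s : ℝ) :
    (gaussianReal m v).map (fun x ↦ a + s * x)
      = gaussianReal (s * m + a) (.mk (s ^ 2) (sq_nonneg _) * v) := by
  have : (fun x ↦ a + s * x) = (a + ·) ∘ (s * ·) := rfl
  rw [this, ← Measure.map_map (by fun_prop) (by fun_prop), gaussianReal_map_const_mul,
    gaussianReal_map_const_add]

lemma gaussianReal_eq_map_const_add_mul (m s : ℝ) :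
    gaussianReal m (s ^ 2).toNNReal = (gaussianReal 0 1).map (fun x ↦ m + s * x) := by
  rw [gaussianReal_map_const_add_mul]
  congr 1
  · ring
  · ext; simp [sq_nonneg]

lemma gaussianReal_Iic (m : ℝ) {s : ℝ} (hs : 0 < s) (c : ℝ) :
    gaussianReal m (s ^ 2).toNNReal (Iic c) = ENNReal.ofReal (stdNormCDF ((c - m) / s)) := by
  rw [gaussianReal_eq_map_const_add_mul, Measure.map_apply (by fun_prop) measurableSet_Iic,
    ofReal_stdNormCDF]
  congr 1
  ext x
  simp only [mem_preimage, mem_Iic, le_div_iff₀ hs]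
  constructor <;> intro h <;> linarith

lemma gaussianReal_Iio (m : ℝ) {s : ℝ} (hs : 0 < s) (c : ℝ) :
    gaussianReal m (s ^ 2).toNNReal (Iio c) = ENNReal.ofReal (stdNormCDF ((c - m) / s)) := by
  have := nullSingletonClass_gaussianReal (μ := m) (v := (s ^ 2).toNNReal) (by simp [hs.ne'])
  rw [measure_congr Iio_ae_eq_Iic, gaussianReal_Iic m hs]

lemma gaussianReal_Ici (m : ℝ) {s : ℝ} (hs : 0 < s) (c : ℝ) :
    gaussianReal m (s ^ 2).toNNReal (Ici c) = ENNReal.ofReal (stdNormCDF ((m - c) / s)) := by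
  rw [← neg_neg m, ← gaussianReal_map_neg, Measure.map_apply (by fun_prop) measurableSet_Ici,
    show (fun x : ℝ ↦ -x) ⁻¹' Ici c = Iic (-c) by ext; simp, gaussianReal_Iic _ hs]
  ring_nf

lemma pi_gaussianReal {ι : Type*} [Fintype ι] (m : ι → ℝ) {v : ℝ≥0} (hv : v ≠ 0) :
    Measure.pi (fun i ↦ gaussianReal (m i) v)
      = volume.withDensity fun x ↦ ENNReal.ofReal (∏ i, gaussianPDFReal (m i) v (x i)) := by
  refine Measure.pi_eq fun s hs ↦ ?_
  have hbox : (volume : Measure (ι → ℝ)).restrict (univ.pi s)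
      = Measure.pi fun i ↦ volume.restrict (s i) := by
    rw [volume_pi, Measure.restrict_pi_pi]
  rw [withDensity_apply _ (.univ_pi hs), ← ofReal_integral_eq_lintegral_ofReal, hbox,
    integral_fintype_prod_eq_prod, ENNReal.ofReal_prod_of_nonneg]
  · simp_rw [gaussianReal_apply_eq_integral _ hv]
  · exact fun i _ ↦ integral_nonneg fun x ↦ gaussianPDFReal_nonneg _ _ _
  · rw [hbox]
    exact .fintype_prod fun i ↦ (integrable_gaussianPDFReal _ _).restrict
  · exact .of_forall fun x ↦ Finset.prod_nonneg fun i _ ↦ gaussianPDFReal_nonneg _ _ _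

lemma stdGaussian_map_inner {E : Type*} [NormedAddCommGroup E] [InnerProductSpace ℝ E]
    [FiniteDimensional ℝ E] [MeasurableSpace E] [BorelSpace E] (w : E) :
    (stdGaussian E).map (fun x ↦ ⟪w, x⟫) = gaussianReal 0 (‖w‖ ^ 2).toNNReal := by
  have := IsGaussian.map_eq_gaussianReal (μ := stdGaussian E) (innerSL ℝ w)
  rwa [integral_strongDual_stdGaussian, variance_dual_stdGaussian, innerSL_apply_norm] at this

section gauss

variable (d : ℕ) (m : EuclideanSpace ℝ (Fin d))

lemma measurable_gaussPdf (σ : ℝ) : Measurable (gaussPdf d m σ) := by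
  unfold gaussPdf; fun_prop

lemma gaussPdf_toLp (σ : ℝ) (x : Fin d → ℝ) :
    gaussPdf d m σ (toLp 2 x) = ∏ i, gaussianPDFReal (m i) (σ ^ 2).toNNReal (x i) := by
  have hnorm : (2 * π * σ ^ 2) ^ (-(d : ℝ) / 2) = (√(2 * π * σ ^ 2))⁻¹ ^ d := by
    rw [Real.sqrt_eq_rpow, ← Real.rpow_neg (by positivity),
      ← Real.rpow_mul_natCast (by positivity)]
    ring_nf
  simp only [gaussianPDFReal, Real.coe_toNNReal _ (sq_nonneg σ), Finset.prod_mul_distrib,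
    Finset.prod_const, Finset.card_univ, Fintype.card_fin, ← Real.exp_sum, gaussPdf,
    EuclideanSpace.real_norm_sq_eq, ← Finset.sum_div, ← Finset.sum_neg_distrib, hnorm]
  simp [mul_assoc]

variable {σ : ℝ}

lemma gauss_eq_map_pi (hσ : σ ≠ 0) :
    gauss d m σ = (Measure.pi fun i ↦ gaussianReal (m i) (σ ^ 2).toNNReal).map (toLp 2) := by
  ext s hs
  rw [Measure.map_apply (by fun_prop) hs, pi_gaussianReal _ (by simpa using hσ),
    withDensity_apply _ (hs.preimage (by fun_prop)), gauss, withDensity_apply _ hs]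
  simp_rw [← gaussPdf_toLp]
  exact ((PiLp.volume_preserving_toLp (Fin d)).setLIntegral_comp_preimage hs
    (measurable_gaussPdf d m σ).ennreal_ofReal).symm

lemma gauss_eq_map_stdGaussian (hσ : σ ≠ 0) :
    gauss d m σ = (stdGaussian (EuclideanSpace ℝ (Fin d))).map (fun x ↦ m + σ • x) := by
  simp_rw [gauss_eq_map_pi d m hσ, gaussianReal_eq_map_const_add_mul]
  rw [← Measure.pi_map_pi (fun _ ↦ by fun_prop), ← map_pi_eq_stdGaussian,
    Measure.map_map (by fun_prop) (by fun_prop), Measure.map_map (by fun_prop) (by fun_prop)]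
  rfl

lemma isProbabilityMeasure_gauss (hσ : σ ≠ 0) : IsProbabilityMeasure (gauss d m σ) := by
  rw [gauss_eq_map_stdGaussian d m hσ]
  exact Measure.isProbabilityMeasure_map (by fun_prop)

lemma gauss_map_inner (hσ : σ ≠ 0) (w : EuclideanSpace ℝ (Fin d)) :
    (gauss d m σ).map (fun x ↦ ⟪w, x⟫) = gaussianReal ⟪w, m⟫ ((σ * ‖w‖) ^ 2).toNNReal := by
  have : (fun x ↦ ⟪w, x⟫) ∘ (fun x ↦ m + σ • x)
      = (fun t ↦ ⟪w, m⟫ + σ * t) ∘ (fun x ↦ ⟪w, x⟫) := by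
    ext x; simp [inner_add_right, real_inner_smul_right]
  rw [gauss_eq_map_stdGaussian d m hσ, Measure.map_map (by fun_prop) (by fun_prop), this,
    ← Measure.map_map (by fun_prop) (by fun_prop), stdGaussian_map_inner,
    gaussianReal_map_const_add_mul]
  congr 1
  · ring
  · ext; simp [mul_pow]; positivity

variable {m} {w : EuclideanSpace ℝ (Fin d)}

lemma gauss_real_inner_lt (hσ : 0 < σ) (hw : w ≠ 0) (c : ℝ) :
    (gauss d m σ).real {x | ⟪w, x⟫ < c} = stdNormCDF ((c - ⟪w, m⟫) / (σ * ‖w‖)) := by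
  rw [measureReal_def, show {x | ⟪w, x⟫ < c} = (fun x ↦ ⟪w, x⟫) ⁻¹' Iio c from rfl,
    ← Measure.map_apply (by fun_prop) measurableSet_Iio, gauss_map_inner d m hσ.ne',
    gaussianReal_Iio _ (by positivity), ENNReal.toReal_ofReal (stdNormCDF_nonneg _)]

lemma gauss_real_inner_ge (hσ : 0 < σ) (hw : w ≠ 0) (c : ℝ) :
    (gauss d m σ).real {x | c ≤ ⟪w, x⟫} = stdNormCDF ((⟪w, m⟫ - c) / (σ * ‖w‖)) := by
  rw [measureReal_def, show {x | c ≤ ⟪w, x⟫} = (fun x ↦ ⟪w, x⟫) ⁻¹' Ici c from rfl,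
    ← Measure.map_apply (by fun_prop) measurableSet_Ici, gauss_map_inner d m hσ.ne',
    gaussianReal_Ici _ (by positivity), ENNReal.toReal_ofReal (stdNormCDF_nonneg _)]

end gauss

lemma norm_sub_le_norm_sub_smul_iff {E : Type*} [NormedAddCommGroup E] [InnerProductSpace ℝ E]
    {b : ℝ} (hb : b < 1) (a x : E) :
    ‖x - a‖ ≤ ‖x - b • a‖ ↔ (1 + b) / 2 * ‖a‖ ^ 2 ≤ ⟪a, x⟫ := by
  have hgap : ‖x - b • a‖ ^ 2 - ‖x - a‖ ^ 2
      = 2 * (1 - b) * (⟪a, x⟫ - (1 + b) / 2 * ‖a‖ ^ 2) := by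
    rw [norm_sub_sq_real, norm_sub_sq_real, real_inner_smul_right, norm_smul, mul_pow,
      Real.norm_eq_abs, sq_abs, real_inner_comm]
    ring
  rw [← sq_le_sq₀ (norm_nonneg _) (norm_nonneg _), ← sub_nonneg, hgap,
    mul_nonneg_iff_of_pos_left (by linarith), sub_nonneg]

section LDA

variable {d : ℕ} (μv : EuclideanSpace ℝ (Fin d)) {σ p : ℝ}

lemma hLDA_eq_ite (hp : 1 / 2 < p) (x : EuclideanSpace ℝ (Fin d)) :
    hLDA d μv p x = if (2 - 2 * p) * ‖μv‖ ^ 2 ≤ ⟪μv, x⟫ then 1 else -1 := by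
  have hmid : (1 + -(4 * p - 3)) / 2 = 2 - 2 * p := by ring
  simp only [hLDA, norm_sub_le_norm_sub_smul_iff (show -(4 * p - 3) < 1 by linarith), hmid]

lemma measurable_hLDA (p : ℝ) : Measurable (hLDA d μv p) := by
  unfold hLDA
  exact Measurable.ite (measurableSet_le (by fun_prop) (by fun_prop)) measurable_const
    measurable_const

lemma Dmix_real_apply (hσ : σ ≠ 0) (hp0 : 0 ≤ p) (hp1 : p ≤ 1)
    {S : Set (EuclideanSpace ℝ (Fin d) × ℝ)} (hS : MeasurableSet S) :
    (Dmix d μv σ p).real S = 1 / 2 * (gauss d μv σ).real {x | (x, 1) ∈ S}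
      + p / 2 * (gauss d (-μv) σ).real {x | (x, -1) ∈ S}
      + (1 - p) / 2 * (gauss d ((3 : ℝ) • μv) σ).real {x | (x, -1) ∈ S} := by
  have := isProbabilityMeasure_gauss d μv hσ
  have := isProbabilityMeasure_gauss d (-μv) hσ
  have := isProbabilityMeasure_gauss d ((3 : ℝ) • μv) hσ
  simp only [measureReal_def, Dmix, Measure.add_apply, Measure.smul_apply, smul_eq_mul,
    Measure.map_apply measurable_prodMk_right hS]
  rw [ENNReal.toReal_add (by finiteness) (by finiteness),
    ENNReal.toReal_add (by finiteness) (by finiteness)]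
  simp only [ENNReal.toReal_mul, ENNReal.toReal_ofReal (by linarith : 0 ≤ p / 2),
    ENNReal.toReal_ofReal (by linarith : 0 ≤ (1 - p) / 2),
    ENNReal.toReal_ofReal (by norm_num : (0 : ℝ) ≤ 1 / 2)]
  rfl

lemma Dmix_real_error (hσ : σ ≠ 0) (hp1 : 1 / 2 < p) (hp2 : p < 1) :
    (Dmix d μv σ p).real {z | hLDA d μv p z.1 ≠ z.2}
      = 1 / 2 * (gauss d μv σ).real {x | ⟪μv, x⟫ < (2 - 2 * p) * ‖μv‖ ^ 2}
        + p / 2 * (gauss d (-μv) σ).real {x | (2 - 2 * p) * ‖μv‖ ^ 2 ≤ ⟪μv, x⟫}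
        + (1 - p) / 2
          * (gauss d ((3 : ℝ) • μv) σ).real {x | (2 - 2 * p) * ‖μv‖ ^ 2 ≤ ⟪μv, x⟫} := by
  have hS : MeasurableSet {z : EuclideanSpace ℝ (Fin d) × ℝ | hLDA d μv p z.1 ≠ z.2} :=
    (measurableSet_eq_fun ((measurable_hLDA μv p).comp measurable_fst) measurable_snd).compl
  rw [Dmix_real_apply μv hσ (by linarith) hp2.le hS]
  congr 4 <;> ext x <;> simp [hLDA_eq_ite μv hp1] <;> norm_num

end LDA

theorem lda_error_general (d : ℕ) (μv : EuclideanSpace ℝ (Fin d)) (hμ : μv ≠ 0)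
    (σ p : ℝ) (hσ : 0 < σ) (hp1 : 1 / 2 < p) (hp2 : p < 1) :
    ((Dmix d μv σ p) {z | hLDA d μv p z.1 ≠ z.2}).toReal =
      (1 / 2) * (stdNormCDF (-(2 * p - 1) * ‖μv‖ / σ)
        + p * stdNormCDF (-(3 - 2 * p) * ‖μv‖ / σ)
        + (1 - p) * stdNormCDF ((2 * p + 1) * ‖μv‖ / σ)) := by
  have hn : 0 < ‖μv‖ := norm_pos_iff.mpr hμ
  rw [← measureReal_def, Dmix_real_error μv hσ.ne' hp1 hp2, gauss_real_inner_lt d hσ hμ,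
    gauss_real_inner_ge d hσ hμ, gauss_real_inner_ge d hσ hμ, inner_neg_right,
    real_inner_smul_right, real_inner_self_eq_norm_sq]
  have e1 : ((2 - 2 * p) * ‖μv‖ ^ 2 - ‖μv‖ ^ 2) / (σ * ‖μv‖) = -(2 * p - 1) * ‖μv‖ / σ := by
    field_simp; ring
  have e2 : (-‖μv‖ ^ 2 - (2 - 2 * p) * ‖μv‖ ^ 2) / (σ * ‖μv‖) = -(3 - 2 * p) * ‖μv‖ / σ := by
    field_simp; ring
  have e3 : (3 * ‖μv‖ ^ 2 - (2 - 2 * p) * ‖μv‖ ^ 2) / (σ * ‖μv‖) = (2 * p + 1) * ‖μv‖ / σ := by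
    field_simp; ring
  rw [e1, e2, e3]
  ring

/-- The misclassification error of the ideal LDA classifier under the
Gaussian-mixture data model `D`. -/
theorem lda_error (d : ℕ) (hd : 1 ≤ d) (μv : EuclideanSpace ℝ (Fin d)) (hμ : μv ≠ 0)
    (σ p : ℝ) (hσ : 0 < σ) (hp1 : 1 / 2 < p) (hp2 : p < 1) :
    ((Dmix d μv σ p) {z | hLDA d μv p z.1 ≠ z.2}).toReal =
      (1 / 2) * (stdNormCDF (-(2 * p - 1) * ‖μv‖ / σ)
        + p * stdNormCDF (-(3 - 2 * p) * ‖μv‖ / σ)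
        + (1 - p) * stdNormCDF ((2 * p + 1) * ‖μv‖ / σ)) :=
  lda_error_general d μv hμ σ p hσ hp1 hp2
end

section
/- Let ν > 0 and p ∈ (1/2, 1). Then [Φ(−(2p−1)ν) + p·Φ(−(3−2p)ν) + (1−p)·Φ((2p+1)ν)] − [Φ(−ν + ln p/(2ν)) + Φ(−ν + ln(1−p)/(2ν)) + p·Φ(−ν − ln p/(2ν)) + (1−p)·Φ(−ν − ln(1−p)/(2ν))] ≥ (1−p) − (3−2p)·Φ(−ν). -/
open MeasureTheory Real Set ProbabilityTheory
open scoped ENNReal RealInnerProductSpace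

namespace StdAux

noncomputable def φ (u : ℝ) : ℝ := (1 / Real.sqrt (2 * Real.pi)) * Real.exp (-u ^ 2 / 2)

lemma φ_nonneg (u : ℝ) : 0 ≤ φ u := by
  apply mul_nonneg
  · positivity
  · positivity

lemma φ_integrable : Integrable φ := by
  have h : φ = fun u : ℝ => (1 / Real.sqrt (2 * Real.pi)) * Real.exp (-(1/2 : ℝ) * u ^ 2) := by
    funext u; unfold φ; ring_nf
  rw [h]
  exact (integrable_exp_neg_mul_sq (by norm_num)).const_mul _

lemma cdf_eq (z : ℝ) : stdNormCDF z = ∫ u in Set.Iic z, φ u := rfl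

lemma cdf_sub (a b : ℝ) : stdNormCDF b - stdNormCDF a = ∫ x in a..b, φ x := by
  rw [cdf_eq, cdf_eq]
  exact intervalIntegral.integral_Iic_sub_Iic φ_integrable.integrableOn φ_integrable.integrableOn

lemma cdf_mono {a b : ℝ} (hab : a ≤ b) : stdNormCDF a ≤ stdNormCDF b := by
  have h := cdf_sub a b
  have h2 : 0 ≤ ∫ x in a..b, φ x :=
    intervalIntegral.integral_nonneg hab (fun x _ => φ_nonneg x)
  linarith

lemma cdf_total : stdNormCDF 0 + ∫ x in Set.Ioi (0:ℝ), φ x = 1 := by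
  rw [cdf_eq]
  rw [intervalIntegral.integral_Iic_add_Ioi φ_integrable.integrableOn φ_integrable.integrableOn]
  have h : ∫ x : ℝ, φ x = (1 / Real.sqrt (2 * Real.pi)) * ∫ x : ℝ, Real.exp (-(1/2 : ℝ) * x ^ 2) := by
    rw [← MeasureTheory.integral_const_mul]
    congr 1; funext u; unfold φ; ring_nf
  rw [h, integral_gaussian]
  rw [show Real.pi / (1/2 : ℝ) = 2 * Real.pi by ring]
  rw [one_div, inv_mul_cancel₀ (by positivity)]

lemma cdf_symm (ν : ℝ) : stdNormCDF ν + stdNormCDF (-ν) = 1 := by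
  have h1 : stdNormCDF (-ν) = ∫ x in Set.Ioi ν, φ x := by
    rw [cdf_eq]
    have : ∀ x : ℝ, φ x = φ (-x) := by
      intro x; unfold φ; rw [neg_pow]; ring_nf
    calc ∫ u in Set.Iic (-ν), φ u = ∫ u in Set.Iic (-ν), φ (-u) := by
          exact MeasureTheory.setIntegral_congr_fun measurableSet_Iic (fun x _ => this x)
      _ = ∫ x in Set.Ioi (-(-ν)), φ x := integral_comp_neg_Iic (-ν) φ
      _ = ∫ x in Set.Ioi ν, φ x := by rw [neg_neg]
  rw [h1, cdf_eq]
  rw [intervalIntegral.integral_Iic_add_Ioi φ_integrable.integrableOn φ_integrable.integrableOn]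
  have h : ∫ x : ℝ, φ x = (1 / Real.sqrt (2 * Real.pi)) * ∫ x : ℝ, Real.exp (-(1/2 : ℝ) * x ^ 2) := by
    rw [← MeasureTheory.integral_const_mul]
    congr 1; funext u; unfold φ; ring_nf
  rw [h, integral_gaussian]
  rw [show Real.pi / (1/2 : ℝ) = 2 * Real.pi by ring]
  rw [one_div, inv_mul_cancel₀ (by positivity)]

/-- Key lemma, upper-bound direction: for `c ≤ 0` and `p ≤ exp (2νc)`,
`Φ(-ν+c) + p·Φ(-ν-c) ≤ (1+p)·Φ(-ν)`. -/
lemma key_le (ν c p : ℝ) (hν : 0 ≤ ν) (hc : c ≤ 0) (hp : 0 ≤ p)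
    (hpc : p ≤ Real.exp (2 * ν * c)) :
    stdNormCDF (-ν + c) + p * stdNormCDF (-ν - c) ≤ (1 + p) * stdNormCDF (-ν) := by
  have h1 : stdNormCDF (-ν - c) - stdNormCDF (-ν) = ∫ x in (-ν)..(-ν - c), φ x :=
    cdf_sub _ _
  have h2 : stdNormCDF (-ν) - stdNormCDF (-ν + c) = ∫ x in (-ν)..(-ν - c), φ (-2*ν - x) := by
    rw [intervalIntegral.integral_comp_sub_left φ (-2*ν)]
    have e1 : -2*ν - (-ν - c) = -ν + c := by ring
    have e2 : -2*ν - (-ν) = -ν := by ring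
    rw [e1, e2, ← cdf_sub]
  have hab : -ν ≤ -ν - c := by linarith
  have hmono : (∫ x in (-ν)..(-ν - c), p * φ x) ≤ ∫ x in (-ν)..(-ν - c), φ (-2*ν - x) := by
    apply intervalIntegral.integral_mono_on hab
    · exact (φ_integrable.const_mul p).intervalIntegrable
    · exact (φ_integrable.comp_sub_left (-2*ν)).intervalIntegrable
    · intro x hx
      obtain ⟨hx1, hx2⟩ := hx
      unfold φ
      rw [mul_comm p, mul_assoc]
      apply mul_le_mul_of_nonneg_left _ (by positivity)
      rw [mul_comm]
      have key : p * Real.exp (-x ^ 2 / 2) ≤ Real.exp (2*ν*c) * Real.exp (-x ^ 2 / 2) :=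
        mul_le_mul_of_nonneg_right hpc (Real.exp_nonneg _)
      refine key.trans ?_
      rw [← Real.exp_add]
      apply Real.exp_le_exp.mpr
      have hxc : ν + x ≤ -c := by linarith
      have : 2 * ν * (ν + x) ≤ 2 * ν * (-c) :=
        mul_le_mul_of_nonneg_left hxc (by linarith)
      nlinarith [sq_nonneg (2*ν + x), sq_nonneg x]
  have hpmul : p * (∫ x in (-ν)..(-ν - c), φ x) = ∫ x in (-ν)..(-ν - c), p * φ x := by
    rw [← intervalIntegral.integral_const_mul]
  nlinarith [h1, h2, hmono, hpmul]

/-- Key lemma, lower-bound direction: for `c ≥ 0` and `0 ≤ p ≤ 1`,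
`(1+p)·Φ(-ν) ≤ Φ(-ν+c) + p·Φ(-ν-c)`. -/
lemma key_ge (ν c p : ℝ) (hν : 0 ≤ ν) (hc : 0 ≤ c) (hp : 0 ≤ p) (hp1 : p ≤ 1) :
    (1 + p) * stdNormCDF (-ν) ≤ stdNormCDF (-ν + c) + p * stdNormCDF (-ν - c) := by
  have h1 : stdNormCDF (-ν + c) - stdNormCDF (-ν) = ∫ x in (-ν)..(-ν + c), φ x :=
    cdf_sub _ _
  have h2 : stdNormCDF (-ν) - stdNormCDF (-ν - c) = ∫ x in (-ν)..(-ν + c), φ (-2*ν - x) := by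
    rw [intervalIntegral.integral_comp_sub_left φ (-2*ν)]
    have e1 : -2*ν - (-ν + c) = -ν - c := by ring
    have e2 : -2*ν - (-ν) = -ν := by ring
    rw [e1, e2, ← cdf_sub]
  have hab : -ν ≤ -ν + c := by linarith
  have hmono : (∫ x in (-ν)..(-ν + c), p * φ (-2*ν - x)) ≤ ∫ x in (-ν)..(-ν + c), φ x := by
    apply intervalIntegral.integral_mono_on hab
    · exact ((φ_integrable.comp_sub_left (-2*ν)).const_mul p).intervalIntegrable
    · exact φ_integrable.intervalIntegrable
    · intro x hx
      obtain ⟨hx1, hx2⟩ := hx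
      unfold φ
      rw [mul_comm p, mul_assoc]
      apply mul_le_mul_of_nonneg_left _ (by positivity)
      rw [mul_comm]
      have key : p * Real.exp (-(-2*ν - x) ^ 2 / 2) ≤ Real.exp (-(-2*ν - x) ^ 2 / 2) := by
        nlinarith [Real.exp_nonneg (-(-2*ν - x) ^ 2 / 2)]
      refine key.trans ?_
      apply Real.exp_le_exp.mpr
      nlinarith [mul_nonneg hν (by linarith : (0:ℝ) ≤ ν + x)]
  have hpmul : p * (∫ x in (-ν)..(-ν + c), φ (-2*ν - x)) = ∫ x in (-ν)..(-ν + c), p * φ (-2*ν - x) := by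
    rw [← intervalIntegral.integral_const_mul]
  nlinarith [h1, h2, hmono, hpmul]

end StdAux

/-- Twice the ideal LDA error minus twice the ideal MDA error bound (with
`ν = ‖μ‖/σ`) is at least `(1−p) − (3−2p)·Φ(−ν)`. -/
theorem lda_mda_gap_nu (ν p : ℝ) (hν : 0 < ν) (hp1 : 1 / 2 < p) (hp2 : p < 1) :
    (stdNormCDF (-(2 * p - 1) * ν) + p * stdNormCDF (-(3 - 2 * p) * ν)
        + (1 - p) * stdNormCDF ((2 * p + 1) * ν))
      - (stdNormCDF (-ν + Real.log p / (2 * ν))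
        + stdNormCDF (-ν + Real.log (1 - p) / (2 * ν))
        + p * stdNormCDF (-ν - Real.log p / (2 * ν))
        + (1 - p) * stdNormCDF (-ν - Real.log (1 - p) / (2 * ν))) ≥
      (1 - p) - (3 - 2 * p) * stdNormCDF (-ν) := by
  have hp0 : 0 < p := by linarith
  have hq0 : 0 < 1 - p := by linarith
  have hlogp : Real.log p < 0 := Real.log_neg hp0 hp2
  have hlogq : Real.log (1 - p) < 0 := Real.log_neg hq0 (by linarith)
  -- first pair bound
  have hB1 : stdNormCDF (-ν + Real.log p / (2 * ν)) + p * stdNormCDF (-ν - Real.log p / (2 * ν))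
      ≤ (1 + p) * stdNormCDF (-ν) := by
    apply StdAux.key_le ν _ p hν.le
    · apply div_nonpos_of_nonpos_of_nonneg hlogp.le (by linarith)
    · exact hp0.le
    · rw [show 2 * ν * (Real.log p / (2 * ν)) = Real.log p by field_simp]
      rw [Real.exp_log hp0]
  have hB2 : stdNormCDF (-ν + Real.log (1 - p) / (2 * ν))
      + (1 - p) * stdNormCDF (-ν - Real.log (1 - p) / (2 * ν))
      ≤ (1 + (1 - p)) * stdNormCDF (-ν) := by
    apply StdAux.key_le ν _ (1 - p) hν.le
    · apply div_nonpos_of_nonpos_of_nonneg hlogq.le (by linarith)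
    · exact hq0.le
    · rw [show 2 * ν * (Real.log (1 - p) / (2 * ν)) = Real.log (1 - p) by field_simp]
      rw [Real.exp_log hq0]
  -- A-group bound
  have hA : (1 + p) * stdNormCDF (-ν)
      ≤ stdNormCDF (-(2 * p - 1) * ν) + p * stdNormCDF (-(3 - 2 * p) * ν) := by
    have := StdAux.key_ge ν (2 * (1 - p) * ν) p hν.le
      (by nlinarith) hp0.le hp2.le
    have e1 : -ν + 2 * (1 - p) * ν = -(2 * p - 1) * ν := by ring
    have e2 : -ν - 2 * (1 - p) * ν = -(3 - 2 * p) * ν := by ring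
    rw [e1, e2] at this
    exact this
  have hsymm : stdNormCDF ν + stdNormCDF (-ν) = 1 := StdAux.cdf_symm ν
  have hmono : stdNormCDF ν ≤ stdNormCDF ((2 * p + 1) * ν) := by
    apply StdAux.cdf_mono
    nlinarith
  nlinarith [hB1, hB2, hA, hsymm, hmono]
end

section
/- Let ν > 0 and t > 2. Then Φ(−ν + 2ν/t) − Φ(−ν + ln(1−1/t)/(2ν)) + (1 − 1/t)·[Φ(−ν − 2ν/t) − Φ(−ν − ln(1−1/t)/(2ν))] ≥ 0. -/
open MeasureTheory Real Set ProbabilityTheory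
open scoped ENNReal RealInnerProductSpace

lemma phi_integrable :
    Integrable (fun u : ℝ => (1 / Real.sqrt (2 * Real.pi)) * Real.exp (-u ^ 2 / 2)) := by
  have h : (fun u : ℝ => (1 / Real.sqrt (2 * Real.pi)) * Real.exp (-u ^ 2 / 2))
      = fun u : ℝ => (1 / Real.sqrt (2 * Real.pi)) * Real.exp (-(1/2 : ℝ) * u ^ 2) := by
    funext u
    congr 2
    ring
  rw [h]
  exact (integrable_exp_neg_mul_sq (by norm_num : (0:ℝ) < 1/2)).const_mul _

lemma cdf_sub (x y : ℝ) :
    stdNormCDF x - stdNormCDF y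
      = ∫ u in y..x, (1 / Real.sqrt (2 * Real.pi)) * Real.exp (-u ^ 2 / 2) := by
  unfold stdNormCDF
  exact (intervalIntegral.integral_Iic_sub_Iic phi_integrable.integrableOn
    phi_integrable.integrableOn)

/-- The combination `(①−④) + (②−⑥)` of CDF differences appearing in the proof of
the LDA–MDA gap is nonnegative. -/
theorem cdf_diff_combination_nonneg (ν t : ℝ) (hν : 0 < ν) (ht : 2 < t) :
    stdNormCDF (-ν + 2 * ν / t) - stdNormCDF (-ν + Real.log (1 - 1 / t) / (2 * ν))
      + (1 - 1 / t) * (stdNormCDF (-ν - 2 * ν / t)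
        - stdNormCDF (-ν - Real.log (1 - 1 / t) / (2 * ν))) ≥ 0 := by
  have ht0 : 0 < t := by linarith
  have hc0 : 0 < 1 - 1 / t := by
    have : 1 / t < 1 / 2 := by
      apply div_lt_div_of_pos_left <;> linarith
    linarith
  set φ : ℝ → ℝ := fun u => (1 / Real.sqrt (2 * Real.pi)) * Real.exp (-u ^ 2 / 2) with hφ
  set L : ℝ := Real.log (1 - 1 / t) / (2 * ν) with hL
  have hLneg : L < 0 := by
    apply div_neg_of_neg_of_pos
    · exact Real.log_neg hc0 (by linarith [one_div_pos.mpr ht0])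
    · linarith
  have ha0 : 0 < 2 * ν / t := by positivity
  have hφc : Continuous φ := by
    apply Continuous.mul continuous_const
    exact Real.continuous_exp.comp (by continuity)
  have key : ∀ x y : ℝ, stdNormCDF x - stdNormCDF y = ∫ u in y..x, φ u := cdf_sub
  rw [key, key]
  -- reflection substitution
  have e1 : -2 * ν - (-ν + 2 * ν / t) = -ν - 2 * ν / t := by ring
  have e2 : -2 * ν - (-ν + L) = -ν - L := by ring
  have hrefl : (∫ u in (-ν - L)..(-ν - 2 * ν / t), φ u)
      = - ∫ x in (-ν + L)..(-ν + 2 * ν / t), φ (-2 * ν - x) := by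
    rw [intervalIntegral.integral_comp_sub_left φ (-2 * ν), e1, e2]
    exact intervalIntegral.integral_symm _ _
  rw [hrefl]
  set lo : ℝ := -ν + L with hlo
  set hi : ℝ := -ν + 2 * ν / t with hhi
  have hlohi : lo ≤ hi := by
    have : L ≤ 2 * ν / t := le_of_lt (lt_trans hLneg ha0)
    simp [hlo, hhi]; linarith
  have hint1 : IntervalIntegrable φ volume lo hi := hφc.intervalIntegrable lo hi
  have hint2 : IntervalIntegrable (fun x => (1 - 1/t) * φ (-2 * ν - x)) volume lo hi := by
    apply Continuous.intervalIntegrable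
    exact continuous_const.mul (hφc.comp (by continuity))
  have hcomb : (∫ u in lo..hi, φ u) + (1 - 1 / t) * (- ∫ x in lo..hi, φ (-2 * ν - x))
      = ∫ u in lo..hi, (φ u - (1 - 1/t) * φ (-2 * ν - u)) := by
    rw [intervalIntegral.integral_sub hint1 hint2]
    have hm : (∫ x in lo..hi, (1 - 1/t) * φ (-2 * ν - x))
        = (1 - 1/t) * ∫ x in lo..hi, φ (-2 * ν - x) :=
      intervalIntegral.integral_const_mul _ _
    rw [hm]; ring
  rw [ge_iff_le, hcomb]
  apply intervalIntegral.integral_nonneg hlohi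
  intro u hu
  have hulo : lo ≤ u := hu.1
  -- pointwise nonnegativity
  have hsqrt : 0 < Real.sqrt (2 * Real.pi) := Real.sqrt_pos.mpr (by positivity)
  have hexp : (1 - 1/t) * Real.exp (-(-2 * ν - u) ^ 2 / 2) ≤ Real.exp (-u ^ 2 / 2) := by
    have hcexp : (1 - 1/t) = Real.exp (Real.log (1 - 1/t)) := (Real.exp_log hc0).symm
    rw [hcexp, ← Real.exp_add]
    apply Real.exp_le_exp.mpr
    have hlogL : Real.log (1 - 1/t) = L * (2 * ν) := by
      rw [hL]; field_simp
    rw [hlogL]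
    have huL : L ≤ ν + u := by
      have : -ν + L ≤ u := hulo
      linarith
    nlinarith [hν, huL]
  simp only [hφ]
  have : (1 - 1/t) * ((1 / Real.sqrt (2 * Real.pi)) * Real.exp (-(-2 * ν - u) ^ 2 / 2))
      ≤ (1 / Real.sqrt (2 * Real.pi)) * Real.exp (-u ^ 2 / 2) := by
    rw [mul_left_comm]
    apply mul_le_mul_of_nonneg_left hexp (by positivity)
  linarith
end
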